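/- Let E be a simplicial commutative k-algebra whose Moore complex satisfies NE_4 = 0. Then for all x_2, y_2 ∈ NE_2 the following identity holds in E_3: (s_2 s_1 (d_2 x_2) − s_1 x_2) · (s_0 y_2 − s_1 y_2 + s_2 y_2) = 0. -/

import Mathlib

/-- A simplicial commutative `k`-algebra: a family of commutative `k`-algebras
`obj n` together with face algebra homomorphisms `d n i : obj (n+1) →ₐ[k] obj n`
(representing `d_i : E_{n+1} → E_n`, `0 ≤ i ≤ n+1`) and degeneracy algebra
homomorphisms `s n i : obj n →ₐ[k] obj (n+1)` (representing
`s_i : E_n → E_{n+1}`, `0 ≤ i ≤ n`), satisfying the simplicial identities. -/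
structure SimplicialCommAlg (k : Type*) [CommRing k]
    (obj : ℕ → Type*) [∀ n, CommRing (obj n)] [∀ n, Algebra k (obj n)] where
  d : (n : ℕ) → ℕ → (obj (n + 1) →ₐ[k] obj n)
  s : (n : ℕ) → ℕ → (obj n →ₐ[k] obj (n + 1))
  dd : ∀ (n i j : ℕ), i < j → j ≤ n + 2 →
    (d n i).comp (d (n + 1) j) = (d n (j - 1)).comp (d (n + 1) i)
  ds_lt : ∀ (m i j : ℕ), i < j → j ≤ m + 1 →
    (d (m + 1) i).comp (s (m + 1) j) = (s m (j - 1)).comp (d m i)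
  ds_self : ∀ (n j : ℕ), j ≤ n → (d n j).comp (s n j) = AlgHom.id k (obj n)
  ds_succ : ∀ (n j : ℕ), j ≤ n → (d n (j + 1)).comp (s n j) = AlgHom.id k (obj n)
  ds_gt : ∀ (m i j : ℕ), j + 1 < i → i ≤ m + 2 →
    (d (m + 1) i).comp (s (m + 1) j) = (s m j).comp (d m (i - 1))
  ss : ∀ (n i j : ℕ), i ≤ j → j ≤ n →
    (s (n + 1) i).comp (s n j) = (s (n + 1) (j + 1)).comp (s n i)


/-! For `x, y ∈ NE₂` put `a = s₂s₁x − s₃s₁x` and `b = s₃(s₀y − s₁y + s₂y)` in `E₄`. The simplicial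
identities give `d₀a = d₃a = 0` and `d₁b = d₂b = 0`, so every face `dᵢ` with `i < 4` kills `ab`,
i.e. `ab ∈ NE₄ = 0`. Applying the last face `d₄` to `ab = 0` gives the identity. -/

namespace SimplicialCommAlg

variable {k : Type*} [CommRing k] {obj : ℕ → Type*} [∀ n, CommRing (obj n)]
  [∀ n, Algebra k (obj n)] (E : SimplicialCommAlg k obj)

@[simp]
theorem d_s_of_lt {m i j : ℕ} (hij : i < j) (hj : j ≤ m + 1) (x : obj (m + 1)) :
    E.d (m + 1) i (E.s (m + 1) j x) = E.s m (j - 1) (E.d m i x) :=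
  AlgHom.congr_fun (E.ds_lt m i j hij hj) x

@[simp]
theorem d_s_self {n j : ℕ} (hj : j ≤ n) (x : obj n) : E.d n j (E.s n j x) = x :=
  AlgHom.congr_fun (E.ds_self n j hj) x

@[simp]
theorem d_succ_s {n j : ℕ} (hj : j ≤ n) (x : obj n) : E.d n (j + 1) (E.s n j x) = x :=
  AlgHom.congr_fun (E.ds_succ n j hj) x

@[simp]
theorem d_s_of_gt {m i j : ℕ} (hij : j + 1 < i) (hi : i ≤ m + 2) (x : obj (m + 1)) :
    E.d (m + 1) i (E.s (m + 1) j x) = E.s m j (E.d m (i - 1) x) :=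
  AlgHom.congr_fun (E.ds_gt m i j hij hi) x

end SimplicialCommAlg

theorem stmt_11 {k : Type*} [CommRing k] {obj : ℕ → Type*}
    [∀ n, CommRing (obj n)] [∀ n, Algebra k (obj n)]
    (E : SimplicialCommAlg k obj)
    (hNE4 : ∀ w : obj 4, E.d 3 0 w = 0 → E.d 3 1 w = 0 →
      E.d 3 2 w = 0 → E.d 3 3 w = 0 → w = 0)
    (x2 : obj 2) (hx2 : E.d 1 0 x2 = 0 ∧ E.d 1 1 x2 = 0) (y2 : obj 2) (hy2 : E.d 1 0 y2 = 0 ∧ E.d 1 1 y2 = 0) :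
    (E.s 2 2 (E.s 1 1 (E.d 1 2 x2)) - E.s 2 1 x2) *
      (E.s 2 0 y2 - E.s 2 1 y2 + E.s 2 2 y2) = 0 := by
  obtain ⟨hx0, -⟩ := hx2
  obtain ⟨-, hy1⟩ := hy2
  set a := E.s 3 2 (E.s 2 1 x2) - E.s 3 3 (E.s 2 1 x2) with ha
  set b := E.s 3 3 (E.s 2 0 y2 - E.s 2 1 y2 + E.s 2 2 y2) with hb
  have ha₀ : E.d 3 0 a = 0 := by simp [ha, hx0]
  have ha₃ : E.d 3 3 a = 0 := by simp [ha]
  have hb₁ : E.d 3 1 b = 0 := by simp [hb, hy1]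
  have hb₂ : E.d 3 2 b = 0 := by simp [hb, hy1]
  have hab : a * b = 0 :=
    hNE4 _ (by simp [ha₀]) (by simp [hb₁]) (by simp [hb₂]) (by simp [ha₃])
  have hda : E.d 3 4 a = E.s 2 2 (E.s 1 1 (E.d 1 2 x2)) - E.s 2 1 x2 := by simp [ha]
  have hdb : E.d 3 4 b = E.s 2 0 y2 - E.s 2 1 y2 + E.s 2 2 y2 := by simp [hb]
  rw [← hda, ← hdb, ← map_mul, hab, map_zero]
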